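/- Let K be a field and T : M_n(K) → M_n(K) a nonzero linear map preserving the L-relation. Then the kernel of T is a principal left ideal of M_n(K), i.e., ker(T) = M_n(K)·X for some matrix X. -/

import Mathlib

/-!
Kernel membership for an `L`-preserver depends only on the row space, because `T A = 0` iff
`rowSpace (T A) = ⊥`. Left multiplication by the transvection `1 + E_ik` keeps the row space
of `A` and adds row `k` of `A` to row `i`; so by linearity, if `T A = 0` then `T` also kills the
matrix whose only nonzero row is row `k` of `A`, put in any position. As every matrix is the sum
of its single-row pieces, `ker T = {A | rowSpace A ≤ V}` where `V` is the space of rows whose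
single-row matrices `T` kills. Finally `rowSpace A ≤ rowSpace X` iff `A = Y * X` for some `Y`,
and `V` is the row space of some `X`.
-/

/-- The row space of a square matrix: the span of its rows. -/
def rowSpace {K : Type*} [Field K] {n : ℕ} (A : Matrix (Fin n) (Fin n) K) :
    Submodule K (Fin n → K) :=
  Submodule.span K (Set.range A)

namespace Matrix

variable {l m n α : Type*} [Fintype m] [DecidableEq l] [DecidableEq m] [NonAssocSemiring α]

theorem single_one_mul (i : l) (k : m) (A : Matrix m n α) :
    single i k (1 : α) * A = of (Pi.single i (A k)) := by
  ext a b
  by_cases h : a = i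
  · subst h
    simp
  · simp [h]

end Matrix

open Matrix

section RowSpace

variable {K : Type*} [Field K] {n : ℕ}

theorem rowSpace_eq_span_range_row (A : Matrix (Fin n) (Fin n) K) :
    rowSpace A = Submodule.span K (Set.range A.row) := rfl

theorem rowSpace_eq_range_vecMulLinear (A : Matrix (Fin n) (Fin n) K) :
    rowSpace A = LinearMap.range A.vecMulLinear :=
  (range_vecMulLinear A).symm

theorem rowSpace_eq_bot_iff {A : Matrix (Fin n) (Fin n) K} : rowSpace A = ⊥ ↔ A = 0 := by
  rw [rowSpace, Submodule.span_eq_bot]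
  exact ⟨fun h => funext fun i => h _ ⟨i, rfl⟩, by rintro rfl _ ⟨i, rfl⟩; rfl⟩

theorem rowSpace_le_rowSpace_iff {A B : Matrix (Fin n) (Fin n) K} :
    rowSpace A ≤ rowSpace B ↔ ∃ Y, A = Y * B := by
  rw [rowSpace_eq_span_range_row, Submodule.span_le, Set.range_subset_iff,
    rowSpace_eq_range_vecMulLinear]
  constructor
  · intro h
    choose Y hY using h
    exact ⟨Y, funext fun i => (hY i).symm⟩
  · rintro ⟨Y, rfl⟩ i
    exact ⟨Y i, rfl⟩

theorem rowSpace_mul_of_isUnit {P : Matrix (Fin n) (Fin n) K} (hP : IsUnit P)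
    (A : Matrix (Fin n) (Fin n) K) : rowSpace (P * A) = rowSpace A := by
  refine le_antisymm (rowSpace_le_rowSpace_iff.2 ⟨P, rfl⟩) (rowSpace_le_rowSpace_iff.2 ⟨P⁻¹, ?_⟩)
  rw [← Matrix.mul_assoc, nonsing_inv_mul _ ((isUnit_iff_isUnit_det P).1 hP), Matrix.one_mul]

theorem exists_rowSpace_eq (V : Submodule K (Fin n → K)) :
    ∃ X : Matrix (Fin n) (Fin n) K, rowSpace X = V := by
  obtain ⟨g, hg⟩ := V.subtype.exists_leftInverse_of_injective V.ker_subtype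
  have hg_range : LinearMap.range g = ⊤ :=
    LinearMap.range_eq_top_of_surjective g fun v => ⟨v, LinearMap.congr_fun hg v⟩
  let f := V.subtype ∘ₗ g
  have hf : (LinearMap.toMatrixRight' f).vecMulLinear = f :=
    LinearMap.toMatrixRight'.symm_apply_apply f
  refine ⟨LinearMap.toMatrixRight' f, ?_⟩
  rw [rowSpace_eq_range_vecMulLinear, hf, LinearMap.range_comp_of_range_eq_top _ hg_range,
    Submodule.range_subtype]

theorem rowSpace_of_single (p : Fin n) (v : Fin n → K) :
    rowSpace (of (Pi.single p v)) = Submodule.span K {v} := by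
  rw [rowSpace_eq_span_range_row, of_row]
  refine le_antisymm (Submodule.span_le.2 ?_) ((Submodule.span_singleton_le_iff_mem _ _).2 ?_)
  · rintro _ ⟨i, rfl⟩
    by_cases h : i = p
    · subst h
      simp
    · simp [h]
  · exact Submodule.subset_span ⟨p, by simp⟩

end RowSpace

section RowKernel

variable {K : Type*} [Field K] {n : ℕ}

def rowKernel (T : Matrix (Fin n) (Fin n) K →ₗ[K] Matrix (Fin n) (Fin n) K) :
    Submodule K (Fin n → K) :=
  ⨅ p, LinearMap.ker
    (T ∘ₗ (ofLinearEquiv K).toLinearMap ∘ₗ LinearMap.single K (fun _ => Fin n → K) p)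

variable {T : Matrix (Fin n) (Fin n) K →ₗ[K] Matrix (Fin n) (Fin n) K}

theorem mem_rowKernel {v : Fin n → K} : v ∈ rowKernel T ↔ ∀ p, T (of (Pi.single p v)) = 0 := by
  simp [rowKernel]

theorem apply_of_single_eq_zero_iff
    (hT : ∀ A B, rowSpace A = rowSpace B → (T A = 0 ↔ T B = 0)) (p q : Fin n) (v : Fin n → K) :
    T (of (Pi.single p v)) = 0 ↔ T (of (Pi.single q v)) = 0 :=
  hT _ _ (by rw [rowSpace_of_single, rowSpace_of_single])

theorem exists_apply_of_single_row_eq_zero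
    (hT : ∀ A B, rowSpace A = rowSpace B → (T A = 0 ↔ T B = 0))
    {A : Matrix (Fin n) (Fin n) K} (hA : T A = 0) (k : Fin n) :
    ∃ p, T (of (Pi.single p (A k))) = 0 := by
  by_cases h : ∃ i, i ≠ k
  · obtain ⟨i, hik⟩ := h
    have hu : IsUnit (transvection i k (1 : K)) := by
      rw [isUnit_iff_isUnit_det, det_transvection_of_ne i k hik]
      exact isUnit_one
    have h_transvection := (hT _ _ (rowSpace_mul_of_isUnit hu A)).2 hA
    rw [transvection, add_mul, Matrix.one_mul, single_one_mul, map_add, hA, zero_add]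
      at h_transvection
    exact ⟨i, h_transvection⟩
  · push Not at h
    -- `k` is the only row index, so `A` is its own single-row piece
    refine ⟨k, ?_⟩
    convert hA
    ext a b
    rw [h a]
    simp

theorem apply_eq_zero_iff_rowSpace_le_rowKernel
    (hT : ∀ A B, rowSpace A = rowSpace B → (T A = 0 ↔ T B = 0)) (A : Matrix (Fin n) (Fin n) K) :
    T A = 0 ↔ rowSpace A ≤ rowKernel T := by
  rw [rowSpace_eq_span_range_row, Submodule.span_le, Set.range_subset_iff]
  simp only [SetLike.mem_coe, row_apply', mem_rowKernel]
  constructor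
  · intro hA k q
    obtain ⟨p, hp⟩ := exists_apply_of_single_row_eq_zero hT hA k
    exact (apply_of_single_eq_zero_iff hT p q _).1 hp
  · intro h
    have hA : A = ∑ k, of (Pi.single k (A k)) := by
      ext a b
      simp [Matrix.sum_apply, Pi.single_apply, ite_apply]
    rw [hA, map_sum]
    exact Finset.sum_eq_zero fun k _ => h k k

end RowKernel

theorem ker_L_preserver_principal_left_ideal_general
    {K : Type*} [Field K] {n : ℕ}
    (T : Matrix (Fin n) (Fin n) K →ₗ[K] Matrix (Fin n) (Fin n) K)
    (hL : ∀ A B : Matrix (Fin n) (Fin n) K,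
      rowSpace A = rowSpace B → rowSpace (T A) = rowSpace (T B)) :
    ∃ X : Matrix (Fin n) (Fin n) K,
      ∀ A : Matrix (Fin n) (Fin n) K,
        T A = 0 ↔ ∃ Y : Matrix (Fin n) (Fin n) K, A = Y * X := by
  have hT : ∀ A B, rowSpace A = rowSpace B → (T A = 0 ↔ T B = 0) := fun A B h => by
    rw [← rowSpace_eq_bot_iff, ← rowSpace_eq_bot_iff, hL A B h]
  obtain ⟨X, hX⟩ := exists_rowSpace_eq (rowKernel T)
  refine ⟨X, fun A => ?_⟩
  rw [← rowSpace_le_rowSpace_iff, hX, apply_eq_zero_iff_rowSpace_le_rowKernel hT]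

/-- The kernel of a nonzero linear `L`-preserver on `M_n(K)` is a principal
left ideal: `ker T = M_n(K) · X` for some matrix `X`. -/
theorem ker_L_preserver_principal_left_ideal
    {K : Type*} [Field K] {n : ℕ}
    (T : Matrix (Fin n) (Fin n) K →ₗ[K] Matrix (Fin n) (Fin n) K)
    (hT : T ≠ 0)
    (hL : ∀ A B : Matrix (Fin n) (Fin n) K,
      rowSpace A = rowSpace B → rowSpace (T A) = rowSpace (T B)) :
    ∃ X : Matrix (Fin n) (Fin n) K,
      ∀ A : Matrix (Fin n) (Fin n) K,
        T A = 0 ↔ ∃ Y : Matrix (Fin n) (Fin n) K, A = Y * X :=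
  ker_L_preserver_principal_left_ideal_general T hL
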